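/- arXiv:2001.03289 — 5 statements merged into one kernel-verified Lean document; each statement's English description precedes it below -/
import Mathlib

section
/- If a rectangle is tiled by N congruent copies of a convex polygon with q vertices, and F, H, ℏ, |𝓕|, |𝓗| are defined as in the context, then (2|𝓕| + |𝓗| + 2)/(F + H + ℏ) = (q-2)/q; equivalently, 2|𝓕|π + |𝓗|π + 2π = N(q-2)π and F + H + ℏ = Nq. -/
/-! Double counting of the tile–vertex incidences. Summing the interior angles of each tile gives
`N (q - 2) π`; regrouping the same sum by vertices gives `2π |𝓕| + π |𝓗| + 4 · π/2`. Counting the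
incidences themselves the same two ways gives `F + H + ℏ = N q`. -/

open Real Finset

section DoubleCounting

variable {V ι : Type*} [Fintype V] [Fintype ι] [DecidableEq ι]

theorem Finset.sum_sum_mem_comm {M : Type*} [AddCommMonoid M] (I : V → Finset ι) (f : ι → V → M) :
    ∑ w, ∑ j ∈ I w, f j w = ∑ j, ∑ w ∈ univ.filter (fun w => j ∈ I w), f j w :=
  sum_comm' (by simp)

theorem Finset.sum_sum_mem_eq_card_smul {M : Type*} [AddCommMonoid M] (I : V → Finset ι)
    (f : ι → V → M) {c : M} (h : ∀ j, ∑ w ∈ univ.filter (fun w => j ∈ I w), f j w = c) :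
    ∑ w, ∑ j ∈ I w, f j w = Fintype.card ι • c := by
  rw [sum_sum_mem_comm, sum_congr rfl fun j _ => h j, sum_const, card_univ]

theorem Finset.sum_card_eq_card_mul (I : V → Finset ι) {q : ℕ}
    (h : ∀ j, (univ.filter (fun w => j ∈ I w)).card = q) :
    ∑ w, (I w).card = Fintype.card ι * q := by
  simpa only [card_eq_sum_ones, smul_eq_mul] using
    Finset.sum_sum_mem_eq_card_smul I (fun _ _ => 1) fun j => (card_eq_sum_ones _).symm.trans (h j)

end DoubleCounting

theorem Finset.sum_univ_eq_of_partition {V M : Type*} [Fintype V] [DecidableEq V]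
    [AddCommMonoid M] {s t u : Finset V} (hst : Disjoint s t) (hsu : Disjoint s u)
    (htu : Disjoint t u) (hcover : s ∪ t ∪ u = univ) (g : V → M) :
    ∑ w, g w = ∑ w ∈ s, g w + ∑ w ∈ t, g w + ∑ w ∈ u, g w := by
  rw [← hcover, sum_union (disjoint_union_left.2 ⟨hsu, htu⟩), sum_union hst]

theorem stmt_0_general {V : Type*} [Fintype V] [DecidableEq V]
    (N q : ℕ)
    (I : V → Finset (Fin N))
    (θ : Fin N → V → ℝ)
    (hq_vertices : ∀ j : Fin N,
      (Finset.univ.filter (fun w : V => j ∈ I w)).card = q)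
    (hangle_sum : ∀ j : Fin N,
      ∑ w ∈ Finset.univ.filter (fun w : V => j ∈ I w), θ j w = ((q : ℝ) - 2) * π)
    (VΩ F H : Finset V)
    (hdisj1 : Disjoint VΩ F) (hdisj2 : Disjoint VΩ H) (hdisj3 : Disjoint F H)
    (hcover : VΩ ∪ F ∪ H = Finset.univ)
    (hVΩcard : VΩ.card = 4)
    (hF : ∀ w ∈ F, ∑ j ∈ I w, θ j w = 2 * π)
    (hH : ∀ w ∈ H, ∑ j ∈ I w, θ j w = π)
    (hVΩ : ∀ w ∈ VΩ, ∑ j ∈ I w, θ j w = π / 2) :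
    2 * (F.card : ℝ) * π + (H.card : ℝ) * π + 2 * π = (N : ℝ) * ((q : ℝ) - 2) * π ∧
    (∑ w ∈ F, (I w).card) + (∑ w ∈ H, (I w).card) + (∑ w ∈ VΩ, (I w).card) = N * q := by
  have hsplit := fun {M : Type} [AddCommMonoid M] (g : V → M) =>
    Finset.sum_univ_eq_of_partition hdisj1 hdisj2 hdisj3 hcover g
  constructor
  · have hangles := Finset.sum_sum_mem_eq_card_smul I θ hangle_sum
    rw [hsplit, sum_congr rfl hVΩ, sum_congr rfl hF, sum_congr rfl hH] at hangles
    simp only [sum_const, nsmul_eq_mul, hVΩcard, Fintype.card_fin, Nat.cast_ofNat] at hangles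
    linear_combination hangles
  · have hcount := Finset.sum_card_eq_card_mul I hq_vertices
    rw [hsplit, Fintype.card_fin] at hcount
    omega

theorem stmt_0 {V : Type*} [Fintype V] [DecidableEq V]
    (N q : ℕ) (hq : 3 ≤ q)
    (I : V → Finset (Fin N))
    (θ : Fin N → V → ℝ)
    (hq_vertices : ∀ j : Fin N,
      (Finset.univ.filter (fun w : V => j ∈ I w)).card = q)
    (hangle_sum : ∀ j : Fin N,
      ∑ w ∈ Finset.univ.filter (fun w : V => j ∈ I w), θ j w = ((q : ℝ) - 2) * π)
    (VΩ F H : Finset V)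
    (hdisj1 : Disjoint VΩ F) (hdisj2 : Disjoint VΩ H) (hdisj3 : Disjoint F H)
    (hcover : VΩ ∪ F ∪ H = Finset.univ)
    (hVΩcard : VΩ.card = 4)
    (hF : ∀ w ∈ F, ∑ j ∈ I w, θ j w = 2 * π)
    (hH : ∀ w ∈ H, ∑ j ∈ I w, θ j w = π)
    (hVΩ : ∀ w ∈ VΩ, ∑ j ∈ I w, θ j w = π / 2) :
    2 * (F.card : ℝ) * π + (H.card : ℝ) * π + 2 * π = (N : ℝ) * ((q : ℝ) - 2) * π ∧
    (∑ w ∈ F, (I w).card) + (∑ w ∈ H, (I w).card) + (∑ w ∈ VΩ, (I w).card) = N * q :=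
  stmt_0_general N q I θ hq_vertices hangle_sum VΩ F H hdisj1 hdisj2 hdisj3 hcover hVΩcard hF hH hVΩ
end

section
/- With Δ = F + H + ℏ − 3|𝓕| − 2|𝓗| − |𝓥_Ω|, one has Δ ≥ 0 and (q−6)|𝓕| + (q−4)|𝓗| + (q−2)Δ + 2q = 8. -/
theorem stmt_1_general (N q F H hbar A B : ℤ)
    (hF : 3 * A ≤ F) (hH : 2 * B ≤ H) (hhbar : 4 ≤ hbar)
    (h1 : 2 * A + B + 2 = N * (q - 2))
    (h2 : F + H + hbar = N * q) :
    0 ≤ F + H + hbar - 3 * A - 2 * B - 4 ∧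
    (q - 6) * A + (q - 4) * B + (q - 2) * (F + H + hbar - 3 * A - 2 * B - 4) + 2 * q = 8 :=
  ⟨by linarith, by linear_combination (q - 2) * h2 - q * h1⟩

theorem stmt_1 (N q F H hbar A B : ℤ) (hq : 3 ≤ q)
    (hA : 0 ≤ A) (hB : 0 ≤ B)
    (hF : 3 * A ≤ F) (hH : 2 * B ≤ H) (hhbar : 4 ≤ hbar)
    (h1 : 2 * A + B + 2 = N * (q - 2))
    (h2 : F + H + hbar = N * q) :
    0 ≤ F + H + hbar - 3 * A - 2 * B - 4 ∧
    (q - 6) * A + (q - 4) * B + (q - 2) * (F + H + hbar - 3 * A - 2 * B - 4) + 2 * q = 8 :=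
  stmt_1_general N q F H hbar A B hF hH hhbar h1 h2
end

section
/- Let 0 < α < π/2 with α ∉ {π/3, π/4}, and let β = π − α. Then there are no natural numbers a, b, c with a < b such that aα + bβ + c·(π/2) ∈ {π/2, π, 2π}. -/
/-!
Since α + β = π, the sum is aπ + (b - a)β + cπ/2, so a solution gives `d β = k π/2` with
`d = b - a ≥ 1` and an integer `k ≤ 4`. As π/2 < β < π this forces `d < k < 2d`, leaving only
`(d, k) = (2, 3)` and `(3, 4)`, i.e. β = 3π/4 or β = 2π/3, which are the excluded α = π/4, π/3.
-/

open Real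

theorem eq_three_pi_div_four_or_two_pi_div_three {β : ℝ} (hβ₁ : π / 2 < β) (hβ₂ : β < π)
    {d : ℕ} (hd : 0 < d) {k : ℤ} (hk : k ≤ 4) (h : d * β = k * (π / 2)) :
    β = 3 * π / 4 ∨ β = 2 * π / 3 := by
  have hπ := pi_pos
  have hd' : (0 : ℝ) < d := by exact_mod_cast hd
  have hlow : (d : ℝ) < k := by nlinarith
  have hhigh : (k : ℝ) < 2 * d := by nlinarith
  have hlow' : (d : ℤ) < k := by exact_mod_cast hlow
  have hhigh' : k < 2 * d := by exact_mod_cast hhigh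
  obtain ⟨rfl, rfl⟩ | ⟨rfl, rfl⟩ : (d = 2 ∧ k = 3) ∨ (d = 3 ∧ k = 4) := by omega
  · left; push_cast at h; linarith
  · right; push_cast at h; linarith

theorem stmt_8 (α : ℝ) (h0 : 0 < α) (h1 : α < π / 2)
    (h3 : α ≠ π / 3) (h4 : α ≠ π / 4) :
    ¬ ∃ a b c : ℕ, a < b ∧
      ((a : ℝ) * α + (b : ℝ) * (π - α) + (c : ℝ) * (π / 2) = π / 2 ∨
       (a : ℝ) * α + (b : ℝ) * (π - α) + (c : ℝ) * (π / 2) = π ∨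
       (a : ℝ) * α + (b : ℝ) * (π - α) + (c : ℝ) * (π / 2) = 2 * π) := by
  rintro ⟨a, b, c, hab, heq⟩
  obtain ⟨T, hT, hsum⟩ : ∃ T : ℤ, T ≤ 4 ∧
      (a : ℝ) * α + (b : ℝ) * (π - α) + (c : ℝ) * (π / 2) = T * (π / 2) := by
    rcases heq with h | h | h
    · exact ⟨1, by norm_num, by rw [h]; ring⟩
    · exact ⟨2, by norm_num, by rw [h]; ring⟩
    · exact ⟨4, le_rfl, by rw [h]; ring⟩
  have hmul : ((b - a : ℕ) : ℝ) * (π - α) = ((T - 2 * a - c : ℤ) : ℝ) * (π / 2) := by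
    push_cast [Nat.cast_sub hab.le]
    linarith
  rcases eq_three_pi_div_four_or_two_pi_div_three (by linarith) (by linarith)
    (Nat.sub_pos_of_lt hab) (by omega) hmul with h | h
  · exact h4 (by linarith)
  · exact h3 (by linarith)
end

section
/- Let Ω be a square with side length ℓ = A + B√3 (A, B rational), tiled by N congruent right-angle trapezoids of area S_P = ((2r+1)/2)√3 + 3s where x = r + s√3 (r, s rational). Then A² + 3B² = 3Ns and 2AB = (2r+1)N/2; in particular s ≥ 0, and s > 0 since ℓ > 0. -/
lemma rat_sqrt3_eq (p q p' q' : ℚ) (h : (p : ℝ) + q * Real.sqrt 3 = p' + q' * Real.sqrt 3) :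
    p = p' ∧ q = q' := by
  have hirr : Irrational (Real.sqrt 3) := by
    simpa using (Nat.Prime.irrational_sqrt (p := 3) (by norm_num))
  by_cases hq : q = q'
  · subst hq
    constructor
    · exact_mod_cast (by linarith : (p : ℝ) = p')
    · rfl
  · exfalso
    have hne : ((q : ℝ) - q') ≠ 0 := by
      intro h0
      exact hq (by exact_mod_cast sub_eq_zero.mp h0)
    have : Real.sqrt 3 = ((p' - p) / (q - q') : ℚ) := by
      push_cast
      field_simp
      linarith
    exact hirr ⟨_, this.symm⟩

theorem stmt_12 (r s A B : ℚ) (N : ℕ) (hN : 0 < N)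
    (hlen : (0 : ℝ) < (A : ℝ) + (B : ℝ) * Real.sqrt 3)
    (harea : ((A : ℝ) + (B : ℝ) * Real.sqrt 3) ^ 2 =
      (N : ℝ) * ((2 * (r : ℝ) + 1) / 2 * Real.sqrt 3 + 3 * (s : ℝ))) :
    A ^ 2 + 3 * B ^ 2 = 3 * (N : ℚ) * s ∧
    2 * A * B = (N : ℚ) * (2 * r + 1) / 2 ∧
    0 < s := by
  have h3 : Real.sqrt 3 ^ 2 = 3 := Real.sq_sqrt (by norm_num)
  have hkey : ((A ^ 2 + 3 * B ^ 2 : ℚ) : ℝ) + ((2 * A * B : ℚ) : ℝ) * Real.sqrt 3 =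
      ((3 * (N : ℚ) * s : ℚ) : ℝ) + (((N : ℚ) * (2 * r + 1) / 2 : ℚ) : ℝ) * Real.sqrt 3 := by
    push_cast
    nlinarith [harea, h3]
  obtain ⟨h1, h2⟩ := rat_sqrt3_eq _ _ _ _ hkey
  refine ⟨h1, h2, ?_⟩
  have hNQ : (0 : ℚ) < (N : ℚ) := by exact_mod_cast hN
  by_contra hs
  push_neg at hs
  have hsum : A ^ 2 + 3 * B ^ 2 ≤ 0 := by
    rw [h1]; nlinarith
  have hA : A = 0 := by nlinarith [sq_nonneg A, sq_nonneg B]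
  have hB : B = 0 := by nlinarith [sq_nonneg A, sq_nonneg B]
  rw [hA, hB] at hlen
  simp at hlen
end

section
/- Let Γ be a finite set of N directed edges, each edge e assigned a unit vector v(e) ∈ {±1, ±i, ±ω, ±iω} ⊂ ℂ with ω = e^{iα}, 0 < α < π/2. If Γ partitions into edge-disjoint directed cycles and along each cycle the assigned vectors sum to 0, then N is even. -/
/-!
Write `ω = exp (α i)`. Every direction is `u` or `u ω` with `u ∈ {±1, ±i}` a unit of `ℤ[i]`,
so the sum along a cycle is `z + w ω` with `z w : ℤ[i]`, and `re + im` of `z` and `w` together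
has the parity of the length of the cycle. If the sum vanishes then `|z| = |w ω| = |w|`, i.e.
`N z = N w`, and since `a² + b² ≡ a + b (mod 2)` the length is `≡ N z + N w = 2 N z ≡ 0`.
-/

open Real

/-- A closed directed trail in a directed multigraph given by `src`/`tgt`. -/
def DIsClosedTrail {V E : Type*} (src tgt : E → V) (l : List E) : Prop :=
  l.Nodup ∧ l.Chain' (fun e f => tgt e = src f) ∧
    l.getLast?.map tgt = l.head?.map src

open Complex

namespace GaussianInt

theorem intCast_norm_zmod_two (z : GaussianInt) : ((z.norm : ℤ) : ZMod 2) = z.re + z.im := by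
  have hsq : ∀ x : ZMod 2, x * x = x := by decide
  simp [Zsqrtd.norm_def, hsq]

theorem norm_eq_of_toComplex_eq_mul {z w : GaussianInt} {ω : ℂ} (hω : ‖ω‖ = 1)
    (h : (z : ℂ) = w * ω) : z.norm = w.norm := by
  have hnorm : ‖(z : ℂ)‖ = ‖(w : ℂ)‖ := by rw [h, norm_mul, hω, mul_one]
  have hsq : normSq (z : ℂ) = normSq (w : ℂ) := by
    rw [← Complex.sq_norm, ← Complex.sq_norm, hnorm]
  exact_mod_cast (intCast_real_norm z).trans (hsq.trans (intCast_real_norm w).symm)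

end GaussianInt

def eightDirections (ω : ℂ) : Set ℂ := {1, -1, I, -I, ω, -ω, I * ω, -(I * ω)}

theorem exists_gaussianInt_of_mem_eightDirections {ω x : ℂ} (hx : x ∈ eightDirections ω) :
    ∃ z w : GaussianInt, x = z + w * ω ∧ ((z.re + z.im + w.re + w.im : ℤ) : ZMod 2) = 1 := by
  simp only [eightDirections, Set.mem_insert_iff, Set.mem_singleton_iff] at hx
  rcases hx with rfl | rfl | rfl | rfl | rfl | rfl | rfl | rfl
  · exact ⟨1, 0, by simp, by decide⟩
  · exact ⟨-1, 0, by simp, by decide⟩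
  · exact ⟨⟨0, 1⟩, 0, by simp [GaussianInt.toComplex_def'], by decide⟩
  · exact ⟨⟨0, -1⟩, 0, by simp [GaussianInt.toComplex_def'], by decide⟩
  · exact ⟨0, 1, by simp, by decide⟩
  · exact ⟨0, -1, by simp, by decide⟩
  · exact ⟨0, ⟨0, 1⟩, by simp [GaussianInt.toComplex_def'], by decide⟩
  · exact ⟨0, ⟨0, -1⟩, by simp [GaussianInt.toComplex_def'], by decide⟩

theorem exists_gaussianInt_of_forall_mem_eightDirections {ω : ℂ} :
    ∀ l : List ℂ, (∀ x ∈ l, x ∈ eightDirections ω) →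
      ∃ z w : GaussianInt, l.sum = z + w * ω ∧
        ((z.re + z.im + w.re + w.im : ℤ) : ZMod 2) = l.length
  | [], _ => ⟨0, 0, by simp, by simp⟩
  | x :: l, hl => by
    obtain ⟨z₀, w₀, hx, hpar₀⟩ :=
      exists_gaussianInt_of_mem_eightDirections (hl x List.mem_cons_self)
    obtain ⟨z, w, hsum, hpar⟩ := exists_gaussianInt_of_forall_mem_eightDirections l
      fun y hy => hl y (List.mem_cons_of_mem x hy)
    refine ⟨z₀ + z, w₀ + w, ?_, ?_⟩
    · rw [List.sum_cons, hx, hsum, GaussianInt.toComplex_add, GaussianInt.toComplex_add]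
      ring
    · simp only [Zsqrtd.re_add, Zsqrtd.im_add, List.length_cons]
      push_cast at hpar₀ hpar ⊢
      linear_combination hpar₀ + hpar

theorem even_length_of_sum_eq_zero {ω : ℂ} (hω : ‖ω‖ = 1) {l : List ℂ}
    (hl : ∀ x ∈ l, x ∈ eightDirections ω) (hsum : l.sum = 0) : Even l.length := by
  obtain ⟨z, w, hzw, hpar⟩ := exists_gaussianInt_of_forall_mem_eightDirections l hl
  have hnorm : z.norm = (-w).norm :=
    GaussianInt.norm_eq_of_toComplex_eq_mul hω <| by
      rw [GaussianInt.toComplex_neg]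
      linear_combination hsum - hzw
  rw [Zsqrtd.norm_neg] at hnorm
  have hz := GaussianInt.intCast_norm_zmod_two z
  have hw := GaussianInt.intCast_norm_zmod_two w
  have htwo : (2 : ZMod 2) = 0 := rfl
  rw [← ZMod.natCast_eq_zero_iff_even, ← hpar]
  push_cast
  linear_combination -hz - hw + congrArg (fun n : ℤ => (n : ZMod 2)) hnorm +
    ((w.norm : ℤ) : ZMod 2) * htwo

theorem List.even_length_flatten {α : Type*} :
    ∀ {L : List (List α)}, (∀ l ∈ L, Even l.length) → Even L.flatten.length
  | [], _ => .zero
  | l :: L, h => by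
    rw [List.flatten_cons, List.length_append]
    exact (h l List.mem_cons_self).add
      (even_length_flatten fun l' hl' => h l' (List.mem_cons_of_mem l hl'))

theorem stmt_16_general {E : Type*} [Fintype E] (N : ℕ)
    (hN : Fintype.card E = N)
    (α : ℝ)
    (v : E → ℂ)
    (hv : ∀ e, v e ∈ ({1, -1, Complex.I, -Complex.I,
      Complex.exp (α * Complex.I), -Complex.exp (α * Complex.I),
      Complex.I * Complex.exp (α * Complex.I),
      -(Complex.I * Complex.exp (α * Complex.I))} : Set ℂ))
    (cs : List (List E))
    (hnodup : cs.flatten.Nodup) (hall : ∀ e : E, e ∈ cs.flatten)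
    (hzero : ∀ c ∈ cs, (c.map v).sum = 0) :
    Even N := by
  have hω : ‖Complex.exp (α * Complex.I)‖ = 1 := Complex.norm_exp_ofReal_mul_I α
  have hcycle : ∀ c ∈ cs, Even c.length := fun c hc => by
    simpa using even_length_of_sum_eq_zero hω (l := c.map v)
      (List.forall_mem_map.2 fun e _ => hv e) (hzero c hc)
  have hcard : Fintype.card E = cs.flatten.length := by
    classical
    rw [Fintype.card_congr (hnodup.getEquivOfForallMemList _ hall).symm, Fintype.card_fin]
  exact hN ▸ hcard ▸ List.even_length_flatten hcycle

theorem stmt_16 {V E : Type*} [Fintype E] (src tgt : E → V) (N : ℕ)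
    (hN : Fintype.card E = N)
    (α : ℝ) (hα0 : 0 < α) (hα1 : α < π / 2)
    (v : E → ℂ)
    (hv : ∀ e, v e ∈ ({1, -1, Complex.I, -Complex.I,
      Complex.exp (α * Complex.I), -Complex.exp (α * Complex.I),
      Complex.I * Complex.exp (α * Complex.I),
      -(Complex.I * Complex.exp (α * Complex.I))} : Set ℂ))
    (cs : List (List E))
    (hcycles : ∀ c ∈ cs, c ≠ [] ∧ DIsClosedTrail src tgt c)
    (hnodup : cs.flatten.Nodup) (hall : ∀ e : E, e ∈ cs.flatten)
    (hzero : ∀ c ∈ cs, (c.map v).sum = 0) :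
    Even N :=
  stmt_16_general N hN α v hv cs hnodup hall hzero
end
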